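/- arXiv:2309.02154 — 4 statements merged into one kernel-verified Lean document; each statement's English description precedes it below -/
import Mathlib

section
/- As x → 0⁺, the quantity ∫ₓ^∞ e^{-u} (log u)/u du + (log x)²/2 converges to γ²/2 + π²/12. -/
/-!
Integrating by parts,
`∫ₓ^∞ e^{-u} log u / u du + (log x)²/2 = ½ ∫ₓ^∞ (log u)² e^{-u} du + ½ (1 - e^{-x}) (log x)²`,
so the limit is `½ Γ''(1)`, as `Γ⁽ᵏ⁾(x) = ∫₀^∞ t^{x-1} (log t)^k e^{-t} dt`. To evaluate
`Γ''(1)`, expand the reflection formula `Γ(1 + x) Γ(1 - x) = π x / sin (π x)` to second order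
at `x = 0`: the left side gives `Γ''(1) - Γ'(1)²`, the right side `π² / 6`, and `Γ'(1) = -γ`.
-/

open MeasureTheory Filter Set Asymptotics Topology Real

lemma tendsto_sub_div_sq_of_hasDerivAt {f f' : ℝ → ℝ} {a c : ℝ}
    (hf : ∀ᶠ x in 𝓝 c, HasDerivAt f (f' x) x) (hc : f' c = 0) (hf' : HasDerivAt f' a c) :
    Tendsto (fun x => (f x - f c) / (x - c) ^ 2) (𝓝[≠] c) (𝓝 (a / 2)) := by
  have hslope : Tendsto (fun x => f' x / (2 * (x - c))) (𝓝[≠] c) (𝓝 (a / 2)) := by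
    refine ((hasDerivAt_iff_tendsto_slope.mp hf').div_const 2).congr fun x => ?_
    rw [slope_def_field, hc, sub_zero, div_div, mul_comm]
  refine HasDerivAt.lhopital_zero_nhdsNE (eventually_nhdsWithin_of_eventually_nhds ?_)
    (Eventually.of_forall fun x => ?_) ?_ ?_ ?_ hslope
  · exact hf.mono fun x hx => hx.sub_const (f c)
  · simpa using (hasDerivAt_pow 2 (x - c)).comp_sub_const x c
  · filter_upwards [self_mem_nhdsWithin] with x hx
    exact mul_ne_zero two_ne_zero (sub_ne_zero.mpr hx)
  · refine tendsto_nhdsWithin_of_tendsto_nhds ?_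
    simpa using hf.self_of_nhds.continuousAt.sub_const (f c)
  · refine tendsto_nhdsWithin_of_tendsto_nhds ?_
    simpa using (by fun_prop : Continuous fun x : ℝ => (x - c) ^ 2).tendsto c

lemma HasDerivAt.comp_one_add_mul_comp_one_sub {f g : ℝ → ℝ} {f' g' x : ℝ}
    (hf : HasDerivAt f f' (1 + x)) (hg : HasDerivAt g g' (1 - x)) :
    HasDerivAt (fun y => f (1 + y) * g (1 - y)) (f' * g (1 - x) - f (1 + x) * g') x := by
  simpa [sub_eq_add_neg] using (hf.comp_const_add 1 x).fun_mul (hg.comp_const_sub 1 x)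

lemma tendsto_sub_sin_div_pow_three :
    Tendsto (fun x => (x - sin x) / x ^ 3) (𝓝[≠] 0) (𝓝 (1 / 6)) := by
  have hbound : ∀ᶠ x in 𝓝[≠] (0 : ℝ), ‖(x - sin x) / x ^ 3 - 1 / 6‖ ≤ |x| ^ 2 / 100 := by
    filter_upwards [self_mem_nhdsWithin,
      nhdsWithin_le_nhds (Metric.closedBall_mem_nhds (0 : ℝ) one_pos)]
      with x (hx : x ≠ 0) hx1
    have hsin := sin_bound (x := x) (by simpa using hx1)
    calc ‖(x - sin x) / x ^ 3 - 1 / 6‖ = |sin x - (x - x ^ 3 / 6)| / |x| ^ 3 := by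
          rw [norm_eq_abs, ← abs_pow, ← abs_div, ← abs_neg]
          congr 1
          field_simp
          ring
      _ ≤ |x| ^ 5 / 100 / |x| ^ 3 := by gcongr
      _ = |x| ^ 2 / 100 := by field_simp
  rw [tendsto_iff_norm_sub_tendsto_zero]
  refine squeeze_zero' (Eventually.of_forall fun _ => norm_nonneg _) hbound ?_
  refine tendsto_nhdsWithin_of_tendsto_nhds ?_
  simpa using ((continuous_abs.pow 2).div_const 100).tendsto (0 : ℝ)

lemma tendsto_self_div_sin_sub_one_div_sq :
    Tendsto (fun x => (x / sin x - 1) / x ^ 2) (𝓝[≠] 0) (𝓝 (1 / 6)) := by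
  have hsin : Tendsto (fun x => sin x / x) (𝓝[≠] 0) (𝓝 1) := by
    have hsq : Tendsto (fun x : ℝ => x ^ 2) (𝓝[≠] 0) (𝓝 0) :=
      tendsto_nhdsWithin_of_tendsto_nhds (by simpa using (continuous_pow 2).tendsto (0 : ℝ))
    refine (by simpa using tendsto_const_nhds.sub (hsq.mul tendsto_sub_sin_div_pow_three) :
      Tendsto (fun x : ℝ => 1 - x ^ 2 * ((x - sin x) / x ^ 3)) _ (𝓝 1)).congr' ?_
    filter_upwards [self_mem_nhdsWithin] with x (hx : x ≠ 0)
    field_simp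
    ring
  have hne : ∀ᶠ x in 𝓝[≠] (0 : ℝ), sin x ≠ 0 := by
    filter_upwards [hsin.eventually_ne one_ne_zero] with x hsx h
    exact hsx (by rw [h, zero_div])
  refine (by simpa using tendsto_sub_sin_div_pow_three.mul (hsin.inv₀ one_ne_zero) :
    Tendsto (fun x : ℝ => (x - sin x) / x ^ 3 * (sin x / x)⁻¹) _ (𝓝 (1 / 6))).congr' ?_
  filter_upwards [self_mem_nhdsWithin, hne] with x (hx : x ≠ 0) hsx
  field_simp

lemma tendsto_pi_mul_div_sin_sub_one_div_sq :
    Tendsto (fun x => (π * x / sin (π * x) - 1) / x ^ 2) (𝓝[≠] 0) (𝓝 (π ^ 2 / 6)) := by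
  have hπ : Tendsto (fun x : ℝ => π * x) (𝓝[≠] 0) (𝓝[≠] 0) :=
    tendsto_nhdsWithin_of_tendsto_nhds_of_eventually_within _
      (tendsto_nhdsWithin_of_tendsto_nhds (by simpa using (continuous_const_mul π).tendsto 0))
      (eventually_nhdsWithin_of_forall fun x hx => mul_ne_zero pi_ne_zero hx)
  have h := (tendsto_self_div_sin_sub_one_div_sq.comp hπ).const_mul (π ^ 2)
  rw [← mul_div_assoc, mul_one] at h
  refine h.congr fun x => ?_
  simp only [Function.comp_apply, mul_pow, ← div_div]
  field_simp [pi_ne_zero]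

lemma isBigO_log_pow_mul_exp_neg_atTop (k : ℕ) (a : ℝ) :
    (fun t : ℝ => log t ^ k * exp (-t)) =O[atTop] (· ^ (-a)) := by
  induction k generalizing a with
  | zero =>
    simpa only [pow_zero, one_mul, neg_one_mul]
      using (isLittleO_exp_neg_mul_rpow_atTop zero_lt_one (-a)).isBigO
  | succ k ih =>
    simpa [pow_succ', mul_assoc] using isBigO_rpow_top_log_smul (lt_add_one a) (ih (a + 1))

lemma isBigO_log_pow_mul_exp_neg_nhdsGT (k : ℕ) {b : ℝ} (hb : 0 < b) :
    (fun t : ℝ => log t ^ k * exp (-t)) =O[𝓝[>] 0] (· ^ (-b)) := by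
  induction k generalizing b with
  | zero =>
    refine IsBigO.of_bound 1 ?_
    filter_upwards [Ioc_mem_nhdsGT one_pos] with t ⟨ht0, ht1⟩
    simp only [pow_zero, one_mul, norm_eq_abs, abs_exp]
    calc exp (-t) ≤ 1 := exp_le_one_iff.mpr (by linarith)
      _ ≤ |t ^ (-b)| :=
        (one_le_rpow_of_pos_of_le_one_of_nonpos ht0 ht1 (by linarith)).trans (le_abs_self _)
  | succ k ih =>
    simpa [pow_succ', mul_assoc] using
      isBigO_rpow_zero_log_smul (half_lt_self hb) (ih (half_pos hb))

lemma continuousOn_log_pow_mul_exp_neg (k : ℕ) :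
    ContinuousOn (fun t : ℝ => log t ^ k * exp (-t)) (Ioi 0) :=
  ((continuousOn_log.mono fun _ ht => ne_of_gt ht).pow k).mul (by fun_prop)

lemma integrableOn_log_pow_mul_exp_neg (k : ℕ) :
    IntegrableOn (fun t : ℝ => log t ^ k * exp (-t)) (Ioi 0) := by
  simpa using mellin_convergent_of_isBigO_scalar (s := 1)
    ((continuousOn_log_pow_mul_exp_neg k).locallyIntegrableOn measurableSet_Ioi)
    (isBigO_log_pow_mul_exp_neg_atTop k 2) one_lt_two
    (isBigO_log_pow_mul_exp_neg_nhdsGT k one_half_pos) one_half_lt_one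

noncomputable def gammaLogMoment (k : ℕ) (x : ℝ) : ℝ :=
  ∫ t in Ioi 0, t ^ (x - 1) * (log t ^ k * exp (-t))

lemma ofReal_gammaLogMoment (k : ℕ) (x : ℝ) :
    (gammaLogMoment k x : ℂ) = mellin (fun t : ℝ => ((log t ^ k * exp (-t) : ℝ) : ℂ)) x := by
  rw [gammaLogMoment, mellin]
  refine integral_ofReal.symm.trans (setIntegral_congr_fun measurableSet_Ioi fun t ht => ?_)
  simp [Complex.ofReal_cpow (le_of_lt ht)]

lemma hasDerivAt_gammaLogMoment (k : ℕ) {x : ℝ} (hx : 0 < x) :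
    HasDerivAt (gammaLogMoment k) (gammaLogMoment (k + 1) x) x := by
  have h := (mellin_hasDerivAt_of_isBigO_rpow (s := x)
    (f := fun t : ℝ => ((log t ^ k * exp (-t) : ℝ) : ℂ))
    ((Complex.continuous_ofReal.comp_continuousOn
      (continuousOn_log_pow_mul_exp_neg k)).locallyIntegrableOn measurableSet_Ioi)
    (Complex.isBigO_ofReal_left.mpr (isBigO_log_pow_mul_exp_neg_atTop k (x + 1))) (by simp)
    (Complex.isBigO_ofReal_left.mpr (isBigO_log_pow_mul_exp_neg_nhdsGT k (half_pos hx)))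
    (by simpa using half_lt_self hx)).2
  convert h.real_of_complex using 1
  · ext y
    rw [← ofReal_gammaLogMoment, Complex.ofReal_re]
  · rw [← Complex.ofReal_re (gammaLogMoment (k + 1) x), ofReal_gammaLogMoment]
    congr 3
    ext t
    push_cast [Complex.real_smul]
    ring

lemma gammaLogMoment_zero_left {x : ℝ} (hx : 0 < x) : gammaLogMoment 0 x = Gamma x := by
  rw [Gamma_eq_integral hx, gammaLogMoment]
  simp only [pow_zero, one_mul, mul_comm]

lemma gammaLogMoment_one_right (k : ℕ) :
    gammaLogMoment k 1 = ∫ t in Ioi 0, log t ^ k * exp (-t) := by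
  simp [gammaLogMoment]

lemma hasDerivAt_Gamma_of_pos {x : ℝ} (hx : 0 < x) :
    HasDerivAt Gamma (gammaLogMoment 1 x) x :=
  (hasDerivAt_gammaLogMoment 0 hx).congr_of_eventuallyEq <|
    (eventually_gt_nhds hx).mono fun _ hy => (gammaLogMoment_zero_left hy).symm

lemma gammaLogMoment_one_one : gammaLogMoment 1 1 = -eulerMascheroniConstant :=
  (hasDerivAt_Gamma_of_pos one_pos).unique hasDerivAt_Gamma_one

lemma Gamma_one_add_mul_Gamma_one_sub {x : ℝ} (hx : x ≠ 0) :
    Gamma (1 + x) * Gamma (1 - x) = π * x / sin (π * x) := by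
  rw [add_comm, Gamma_add_one hx, mul_assoc, Gamma_mul_Gamma_one_sub]
  ring

lemma hasDerivAt_Gamma_one_add_mul_Gamma_one_sub {x : ℝ} (hx : |x| < 1) :
    HasDerivAt (fun y => Gamma (1 + y) * Gamma (1 - y))
      (gammaLogMoment 1 (1 + x) * Gamma (1 - x) - Gamma (1 + x) * gammaLogMoment 1 (1 - x)) x := by
  obtain ⟨hx₁, hx₂⟩ := abs_lt.mp hx
  exact (hasDerivAt_Gamma_of_pos (by linarith)).comp_one_add_mul_comp_one_sub
    (hasDerivAt_Gamma_of_pos (by linarith))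

lemma hasDerivAt_deriv_Gamma_one_add_mul_Gamma_one_sub :
    HasDerivAt (fun y => gammaLogMoment 1 (1 + y) * Gamma (1 - y)
        - Gamma (1 + y) * gammaLogMoment 1 (1 - y))
      (2 * (gammaLogMoment 2 1 - gammaLogMoment 1 1 ^ 2)) 0 := by
  have hΓ₁ := hasDerivAt_Gamma_of_pos (x := 1 + 0) (by norm_num)
  have hΓ₂ := hasDerivAt_Gamma_of_pos (x := 1 - 0) (by norm_num)
  have hM₁ := hasDerivAt_gammaLogMoment 1 (x := 1 + 0) (by norm_num)
  have hM₂ := hasDerivAt_gammaLogMoment 1 (x := 1 - 0) (by norm_num)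
  refine ((hM₁.comp_one_add_mul_comp_one_sub hΓ₂).fun_sub
    (hΓ₁.comp_one_add_mul_comp_one_sub hM₂)).congr_deriv ?_
  norm_num [Gamma_one]
  ring

lemma tendsto_Gamma_one_add_mul_Gamma_one_sub_sub_one_div_sq :
    Tendsto (fun x => (Gamma (1 + x) * Gamma (1 - x) - 1) / x ^ 2) (𝓝[≠] 0)
      (𝓝 (gammaLogMoment 2 1 - gammaLogMoment 1 1 ^ 2)) := by
  have hf : ∀ᶠ x in 𝓝 (0 : ℝ), HasDerivAt (fun y => Gamma (1 + y) * Gamma (1 - y))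
      (gammaLogMoment 1 (1 + x) * Gamma (1 - x) - Gamma (1 + x) * gammaLogMoment 1 (1 - x)) x := by
    filter_upwards [Metric.ball_mem_nhds (0 : ℝ) one_pos] with x hx
    exact hasDerivAt_Gamma_one_add_mul_Gamma_one_sub (by simpa using hx)
  simpa [Gamma_one] using tendsto_sub_div_sq_of_hasDerivAt hf (by simp [mul_comm])
    hasDerivAt_deriv_Gamma_one_add_mul_Gamma_one_sub

lemma gammaLogMoment_two_one :
    gammaLogMoment 2 1 = eulerMascheroniConstant ^ 2 + π ^ 2 / 6 := by
  have h : Tendsto (fun x => (Gamma (1 + x) * Gamma (1 - x) - 1) / x ^ 2) (𝓝[≠] 0)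
      (𝓝 (π ^ 2 / 6)) :=
    tendsto_pi_mul_div_sin_sub_one_div_sq.congr' <| eventually_nhdsWithin_of_forall
      fun x hx => by simp only [Gamma_one_add_mul_Gamma_one_sub hx]
  have := tendsto_nhds_unique tendsto_Gamma_one_add_mul_Gamma_one_sub_sub_one_div_sq h
  rw [gammaLogMoment_one_one] at this
  linarith

lemma integrableOn_exp_neg_mul_log_div {x : ℝ} (hx : 0 < x) :
    IntegrableOn (fun u => exp (-u) * log u / u) (Ioi x) := by
  refine integrable_of_isBigO_exp_neg one_pos ?_ (IsBigO.of_bound 1 ?_)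
  · refine ContinuousOn.div (ContinuousOn.mul (by fun_prop) ?_) continuousOn_id
      fun u hu => (hx.trans_le hu).ne'
    exact continuousOn_log.mono fun u hu => (hx.trans_le hu).ne'
  · filter_upwards [eventually_ge_atTop 1] with u hu
    have hu0 : 0 < u := one_pos.trans_le hu
    rw [neg_one_mul, one_mul, norm_div, norm_mul, norm_of_nonneg hu0.le,
      norm_of_nonneg (log_nonneg hu), mul_div_assoc]
    exact mul_le_of_le_one_right (norm_nonneg _)
      ((div_le_one hu0).mpr (log_le_self hu0.le))

lemma integral_exp_neg_mul_log_div {x : ℝ} (hx : 0 < x) :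
    ∫ u in Ioi x, exp (-u) * log u / u
      = (∫ u in Ioi x, log u ^ 2 * exp (-u)) / 2 - exp (-x) * log x ^ 2 / 2 := by
  have hsq : IntegrableOn (fun u => log u ^ 2 * exp (-u) / 2) (Ioi x) :=
    ((integrableOn_log_pow_mul_exp_neg 2).mono_set (Ioi_subset_Ioi hx.le)).div_const 2
  have hderiv : ∀ u ∈ Ioi x, HasDerivAt (fun u => exp (-u) * log u ^ 2 / 2)
      (exp (-u) * log u / u - log u ^ 2 * exp (-u) / 2) u := by
    intro u hu
    have hu0 : u ≠ 0 := (hx.trans hu).ne'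
    refine ((((hasDerivAt_neg u).exp).mul ((hasDerivAt_log hu0).pow 2)).div_const 2).congr_deriv ?_
    simp only [Pi.pow_apply]
    field_simp
    ring
  have hlim : Tendsto (fun u => exp (-u) * log u ^ 2 / 2) atTop (𝓝 0) := by
    have := ((isBigO_log_pow_mul_exp_neg_atTop 2 1).trans_tendsto
      (tendsto_rpow_neg_atTop one_pos)).div_const 2
    simpa [mul_comm] using this
  have hFTC := integral_Ioi_of_hasDerivAt_of_tendsto
    (by fun_prop (disch := exact hx.ne') : ContinuousWithinAt _ (Ici x) x)
    hderiv ((integrableOn_exp_neg_mul_log_div hx).sub hsq) hlim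
  rw [integral_sub (integrableOn_exp_neg_mul_log_div hx) hsq, integral_div] at hFTC
  linarith

lemma tendsto_one_sub_exp_neg_mul_log_sq :
    Tendsto (fun x => (1 - exp (-x)) * log x ^ 2) (𝓝[>] 0) (𝓝 0) := by
  have h := (tendsto_log_mul_rpow_nhdsGT_zero one_half_pos).pow 2
  rw [zero_pow two_ne_zero] at h
  refine squeeze_zero' ?_ ?_ h
  · filter_upwards [self_mem_nhdsWithin] with x (hx : 0 < x)
    exact mul_nonneg (sub_nonneg.mpr (exp_le_one_iff.mpr (by linarith))) (sq_nonneg _)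
  · filter_upwards [self_mem_nhdsWithin] with x (hx : 0 < x)
    rw [← sqrt_eq_rpow, mul_pow, sq_sqrt hx.le, mul_comm]
    gcongr
    linarith [add_one_le_exp (-x)]

/-- As x → 0⁺, ∫ₓ^∞ e^{-u} (log u)/u du + (log x)²/2 tends to γ²/2 + π²/12. -/
theorem expIntegral_log_tendsto :
    Tendsto (fun x : ℝ =>
        (∫ u in Set.Ioi x, Real.exp (-u) * Real.log u / u) + (Real.log x) ^ 2 / 2)
      (nhdsWithin 0 (Set.Ioi 0))
      (nhds (Real.eulerMascheroniConstant ^ 2 / 2 + Real.pi ^ 2 / 12)) := by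
  have hmoment : Tendsto (fun x => ∫ u in Ioi x, log u ^ 2 * exp (-u)) (𝓝[>] 0)
      (𝓝 (eulerMascheroniConstant ^ 2 + π ^ 2 / 6)) := by
    rw [← gammaLogMoment_two_one, gammaLogMoment_one_right]
    exact ((integrableOn_log_pow_mul_exp_neg 2).continuousOn_Ici_primitive_Ioi 0
      self_mem_Ici).mono Ioi_subset_Ici_self
  have hsum := (hmoment.div_const 2).add (tendsto_one_sub_exp_neg_mul_log_sq.div_const 2)
  rw [show eulerMascheroniConstant ^ 2 / 2 + π ^ 2 / 12
    = (eulerMascheroniConstant ^ 2 + π ^ 2 / 6) / 2 + 0 / 2 by ring]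
  refine hsum.congr' ?_
  filter_upwards [self_mem_nhdsWithin] with x (hx : 0 < x)
  rw [integral_exp_neg_mul_log_div hx]
  ring
end

section
/- For every complex z with |z| < 1, Γ(1+z) = exp(-γ z + Σ_{k=2}^∞ (-1)^k ζ(k) z^k / k). -/
/-!
Gauss's limit `GammaSeq (1 + z) n → Γ(1 + z)` together with `H_n - log n → γ` gives Weierstrass's
product `Γ(1 + z) = lim e^{-γz} ∏_{j<n} e^{z/(j+1)} / (1 + z/(j+1))`. For `‖z‖ < 1` the logarithm
of the `j`-th factor is `∑_{k≥2} (-1)^k (z/(j+1))^k / k`. This double series converges absolutely,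
so its order of summation can be swapped, and summing over `j` first turns `∑_j (j+1)^{-k}` into
`ζ(k)`.
-/

open Filter Topology Finset

lemma zeta_nat_eq_tsum_one_div_nat_add_one_pow {k : ℕ} (hk : 1 < k) :
    riemannZeta k = ∑' n : ℕ, 1 / ((n : ℂ) + 1) ^ k := by
  rw [zeta_eq_tsum_one_div_nat_add_one_cpow (by simpa using hk)]
  simp_rw [Complex.cpow_natCast]

lemma summable_one_div_nat_add_one_sq : Summable fun n : ℕ ↦ 1 / ((n : ℝ) + 1) ^ 2 := by
  exact_mod_cast (summable_nat_add_iff 1).mpr (Real.summable_one_div_nat_pow.mpr one_lt_two)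

namespace Complex

lemma hasSum_sub_log_one_add {w : ℂ} (hw : ‖w‖ < 1) :
    HasSum (fun k : ℕ ↦ (-1) ^ (k + 2) * w ^ (k + 2) / (k + 2)) (w - log (1 + w)) := by
  have h := ((hasSum_nat_add_iff' 2).mpr (hasSum_taylorSeries_log hw)).neg
  have h₀ : -(log (1 + w) - ∑ i ∈ range 2, (-1) ^ (i + 1) * w ^ i / i) = w - log (1 + w) := by
    simp [sum_range_succ]
  rw [h₀] at h
  convert h using 2 with k
  · rfl
  · push_cast
    ring

lemma norm_div_natCast_add_one (z : ℂ) (j : ℕ) : ‖z / (j + 1)‖ = ‖z‖ / (j + 1) := by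
  rw [norm_div]
  norm_cast

lemma norm_div_natCast_add_one_lt {z : ℂ} (hz : ‖z‖ < 1) (j : ℕ) : ‖z / (j + 1)‖ < 1 := by
  rw [norm_div_natCast_add_one]
  exact (div_le_self (norm_nonneg z) (by simp)).trans_lt hz

lemma prod_range_one_add_add_natCast (z : ℂ) (n : ℕ) :
    ∏ j ∈ range n, (1 + z + j) = n.factorial * ∏ j ∈ range n, (1 + z / (j + 1)) := by
  rw [← prod_range_add_one_eq_factorial, Nat.cast_prod, ← prod_mul_distrib]
  refine prod_congr rfl fun j _ ↦ ?_
  field_simp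
  push_cast
  ring

lemma GammaSeq_one_add (z : ℂ) {n : ℕ} (hn : n ≠ 0) :
    GammaSeq (1 + z) n = n / (n + 1 + z) * (n ^ z / ∏ j ∈ range n, (1 + z / (j + 1))) := by
  have hn' : (n : ℂ) ≠ 0 := Nat.cast_ne_zero.mpr hn
  have hfac : (n.factorial : ℂ) ≠ 0 := Nat.cast_ne_zero.mpr n.factorial_ne_zero
  rw [GammaSeq, prod_range_succ, prod_range_one_add_add_natCast, cpow_add _ _ hn', cpow_one]
  field_simp
  ring

lemma exp_mul_prod_exp_div_one_add (z : ℂ) {n : ℕ} (hn : n ≠ 0) :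
    exp (-Real.eulerMascheroniConstant * z) *
        ∏ j ∈ range n, exp (z / (j + 1)) / (1 + z / (j + 1)) =
      exp ((harmonic n - Real.log n - Real.eulerMascheroniConstant : ℝ) * z) *
        (n ^ z / ∏ j ∈ range n, (1 + z / (j + 1))) := by
  have hharmonic : ∑ j ∈ range n, z / (j + 1) = (harmonic n : ℝ) * z := by
    simp [harmonic, sum_mul, div_eq_inv_mul]
  rw [prod_div_distrib, ← exp_sum, hharmonic, cpow_def_of_ne_zero (Nat.cast_ne_zero.mpr hn),
    ← natCast_log, mul_div_assoc', mul_div_assoc', ← exp_add, ← exp_add]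
  congr 2
  push_cast
  ring

theorem tendsto_exp_mul_prod_exp_div_one_add_Gamma (z : ℂ) :
    Tendsto (fun n : ℕ ↦ exp (-Real.eulerMascheroniConstant * z) *
        ∏ j ∈ range n, exp (z / (j + 1)) / (1 + z / (j + 1))) atTop (𝓝 (Gamma (1 + z))) := by
  have hratio : Tendsto (fun n : ℕ ↦ (n + 1 + z) / n) atTop (𝓝 1) := by
    have h := (tendsto_inv_atTop_nhds_zero_nat (𝕜 := ℂ)).const_mul (1 + z) |>.const_add 1
    rw [mul_zero, add_zero] at h
    refine h.congr' ?_
    filter_upwards [eventually_ne_atTop 0] with n hn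
    field_simp
    ring
  have hexp : Tendsto (fun n : ℕ ↦
      exp ((harmonic n - Real.log n - Real.eulerMascheroniConstant : ℝ) * z)) atTop (𝓝 1) := by
    have h := ((Real.tendsto_harmonic_sub_log.sub_const
      Real.eulerMascheroniConstant).ofReal.mul_const z).cexp
    rwa [sub_self, ofReal_zero, zero_mul, exp_zero] at h
  have h := ((GammaSeq_tendsto_Gamma (1 + z)).mul hratio).mul hexp
  rw [mul_one, mul_one] at h
  refine h.congr' ?_
  filter_upwards [eventually_ne_atTop 0, hratio.eventually_ne one_ne_zero] with n hn hratio_ne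
  have : (n + 1 + z) ≠ 0 := (div_ne_zero_iff.mp hratio_ne).1
  rw [exp_mul_prod_exp_div_one_add z hn, GammaSeq_one_add z hn]
  field_simp

lemma summable_neg_one_pow_mul_div_natCast_add_one_pow {z : ℂ} (hz : ‖z‖ < 1) :
    Summable (Function.uncurry fun j k : ℕ ↦
      (-1) ^ (k + 2) * (z / (j + 1)) ^ (k + 2) / (k + 2)) := by
  refine .of_norm_bounded (summable_one_div_nat_add_one_sq.mul_of_nonneg
    (summable_geometric_of_lt_one (norm_nonneg z) hz) (fun j ↦ by positivity)
    (fun k ↦ by positivity)) fun ⟨j, k⟩ ↦ ?_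
  have hj : (1 : ℝ) ≤ j + 1 := by simp
  have hk : (1 : ℝ) ≤ ‖(k : ℂ) + 2‖ := by norm_cast; simp
  rw [Function.uncurry_apply_pair, norm_div, norm_mul, norm_pow, norm_pow, norm_neg, norm_one,
    one_pow, one_mul, norm_div_natCast_add_one, pow_add, div_pow, div_pow]
  calc (‖z‖ ^ k / (j + 1) ^ k * (‖z‖ ^ 2 / (j + 1) ^ 2)) / ‖(k : ℂ) + 2‖
      ≤ ‖z‖ ^ k / (j + 1) ^ k * (‖z‖ ^ 2 / (j + 1) ^ 2) := div_le_self (by positivity) hk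
    _ ≤ ‖z‖ ^ k * (1 / (j + 1) ^ 2) := by
        gcongr
        · exact div_le_self (by positivity) (one_le_pow₀ hj)
        · exact pow_le_one₀ (norm_nonneg z) hz.le
    _ = 1 / ((j : ℝ) + 1) ^ 2 * ‖z‖ ^ k := mul_comm _ _

lemma hasSum_div_sub_log_one_add_div {z : ℂ} (hz : ‖z‖ < 1) :
    HasSum (fun j : ℕ ↦ z / (j + 1) - log (1 + z / (j + 1)))
      (∑' k : ℕ, (-1) ^ (k + 2) * riemannZeta (k + 2) * z ^ (k + 2) / (k + 2)) := by
  have hF := summable_neg_one_pow_mul_div_natCast_add_one_pow hz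
  have hrow (j : ℕ) := hasSum_sub_log_one_add (norm_div_natCast_add_one_lt hz j)
  have hcol (k : ℕ) : ∑' j : ℕ, (-1) ^ (k + 2) * (z / (j + 1)) ^ (k + 2) / (k + 2) =
      (-1) ^ (k + 2) * riemannZeta (k + 2) * z ^ (k + 2) / (k + 2) := by
    have hζ := zeta_nat_eq_tsum_one_div_nat_add_one_pow (k := k + 2) (by omega)
    push_cast at hζ
    rw [hζ, ← tsum_mul_left, ← tsum_mul_right, ← tsum_div_const]
    congr! 2 with j
    rw [div_pow]
    ring
  rw [← tsum_congr hcol, hF.tsum_comm, ← hF.tsum_prod_uncurry hF.prod_factor]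
  exact hF.hasSum.prod_fiberwise hrow

end Complex

open Complex

/-- For |z| < 1, Γ(1+z) = exp(-γ z + Σ_{k=2}^∞ (-1)^k ζ(k) z^k / k). -/
theorem Gamma_one_add_eq_exp (z : ℂ) (hz : ‖z‖ < 1) :
    Complex.Gamma (1 + z) =
      Complex.exp (-(Real.eulerMascheroniConstant : ℂ) * z +
        ∑' k : ℕ, (-1 : ℂ) ^ (k + 2) * riemannZeta ((k : ℂ) + 2) * z ^ (k + 2) /
          ((k : ℂ) + 2)) := by
  have hfactor (j : ℕ) : exp (z / (j + 1) - log (1 + z / (j + 1))) =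
      exp (z / (j + 1)) / (1 + z / (j + 1)) := by
    rw [exp_sub, exp_log (slitPlane_ne_zero
      (mem_slitPlane_of_norm_lt_one (norm_div_natCast_add_one_lt hz j)))]
  have hlim := (hasSum_div_sub_log_one_add_div hz).tendsto_sum_nat.cexp.const_mul
    (exp (-Real.eulerMascheroniConstant * z))
  simp only [exp_sum, hfactor] at hlim
  rw [exp_add]
  exact tendsto_nhds_unique (tendsto_exp_mul_prod_exp_div_one_add_Gamma z) hlim
end

section
/- Let ℓ₁, ..., ℓ_k : ℝ² → ℝ be affine functions whose linear parts (gradients) positively span ℝ², i.e., 0 lies in the interior of the convex hull of the gradients. Then the function x ↦ exp(-Σ_{i=1}^k e^{ℓ_i(x)}) is Lebesgue integrable on ℝ². -/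
open MeasureTheory Real Set

lemma integrable_exp_neg_mul_abs' {a : ℝ} (ha : 0 < a) :
    Integrable fun x : ℝ => Real.exp (-(a * |x|)) := by
  have hIoi : IntegrableOn (fun x : ℝ => Real.exp (-(a * |x|))) (Ioi 0) := by
    refine (exp_neg_integrableOn_Ioi 0 ha).congr_fun (fun x hx => ?_) measurableSet_Ioi
    rw [abs_of_pos hx]
    ring_nf
  rw [← integrableOn_univ, ← @Iio_union_Ici _ _ (0 : ℝ), integrableOn_union,
    integrableOn_Ici_iff_integrableOn_Ioi]
  refine ⟨?_, hIoi⟩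
  rw [← (Measure.measurePreserving_neg (volume : Measure ℝ)).integrableOn_comp_preimage
      (Homeomorph.neg ℝ).measurableEmbedding]
  simpa [Function.comp_def] using hIoi

/-- If the gradients of affine functions ℓ₁,…,ℓ_k positively span ℝ², then
exp(-Σ e^{ℓᵢ(x)}) is integrable on ℝ². -/
theorem integrable_exp_neg_sum_exp (k : ℕ) (ℓ : Fin k → ((ℝ × ℝ) →ᵃ[ℝ] ℝ))
    (hspan : (0 : ℝ × ℝ) ∈ interior (convexHull ℝ
      (Set.range fun i => (((ℓ i).linear (1, 0)), ((ℓ i).linear (0, 1)))))) :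
    Integrable (fun x : ℝ × ℝ => Real.exp (-∑ i, Real.exp (ℓ i x))) := by
  classical
  rcases Nat.eq_zero_or_pos k with hk | hk
  · subst hk
    simp [Set.range_eq_empty, convexHull_empty] at hspan
  haveI : Nonempty (Fin k) := Fin.pos_iff_nonempty.mp hk
  have hne : (Finset.univ : Finset (Fin k)).Nonempty := Finset.univ_nonempty
  set v : Fin k → ℝ × ℝ := fun i => (((ℓ i).linear (1, 0)), ((ℓ i).linear (0, 1))) with hv
  obtain ⟨ε, hε, hball⟩ := Metric.mem_nhds_iff.mp (mem_interior_iff_mem_nhds.mp hspan)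
  have hlin : ∀ i (x : ℝ × ℝ), (ℓ i).linear x = (v i).1 * x.1 + (v i).2 * x.2 := by
    intro i x
    have hx : x = x.1 • ((1:ℝ),(0:ℝ)) + x.2 • ((0:ℝ),(1:ℝ)) := by
      ext <;> simp
    conv_lhs => rw [hx]
    rw [(ℓ i).linear.map_add, (ℓ i).linear.map_smul, (ℓ i).linear.map_smul]
    simp [hv, smul_eq_mul, mul_comm]
  -- key claim
  have key : ∀ x : ℝ × ℝ, ∃ i, ε / 2 * ‖x‖ ≤ (ℓ i).linear x := by
    intro x
    rcases eq_or_ne x 0 with rfl | hx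
    · exact ⟨Classical.arbitrary _, by simp⟩
    have hxn : 0 < ‖x‖ := norm_pos_iff.mpr hx
    set f : ℝ × ℝ → ℝ := fun w => w.1 * x.1 + w.2 * x.2 with hf
    have hflin : IsLinearMap ℝ f := by
      constructor
      · intro a b; simp [hf]; ring
      · intro c a; simp [hf]; ring
    set y : ℝ × ℝ := ((ε / 2) / ‖x‖) • x with hy
    have hyb : y ∈ Metric.ball (0 : ℝ × ℝ) ε := by
      rw [Metric.mem_ball, dist_zero_right, hy, norm_smul, Real.norm_eq_abs,
        abs_of_pos (div_pos (half_pos hε) hxn), div_mul_cancel₀ _ hxn.ne']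
      linarith
    have hyc : y ∈ convexHull ℝ (Set.range v) := hball hyb
    set M : ℝ := Finset.univ.sup' hne (fun i => f (v i)) with hM
    have hsub : convexHull ℝ (Set.range v) ⊆ {w | f w ≤ M} := by
      apply convexHull_min ?_ (convex_halfSpace_le hflin M)
      rintro w ⟨i, rfl⟩
      exact Finset.le_sup' (fun i => f (v i)) (Finset.mem_univ i)
    have hyM : f y ≤ M := hsub hyc
    obtain ⟨i, -, hi⟩ := Finset.exists_mem_eq_sup' hne (fun i => f (v i))
    refine ⟨i, ?_⟩
    have hfy : f y = ((ε/2)/‖x‖) * (x.1^2 + x.2^2) := by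
      simp [hf, hy]; ring
    have hnorm2 : ‖x‖^2 ≤ x.1^2 + x.2^2 := by
      have hn : ‖x‖ = max |x.1| |x.2| := rfl
      rcases le_total |x.1| |x.2| with h | h
      · rw [hn, max_eq_right h, sq_abs]; nlinarith [sq_nonneg x.1]
      · rw [hn, max_eq_left h, sq_abs]; nlinarith [sq_nonneg x.2]
    have h1 : ε/2 * ‖x‖ ≤ f y := by
      rw [hfy]
      have : ε/2 * ‖x‖ = ((ε/2)/‖x‖) * ‖x‖^2 := by
        field_simp
      rw [this]
      exact mul_le_mul_of_nonneg_left hnorm2 (le_of_lt (div_pos (half_pos hε) hxn))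
    calc ε/2 * ‖x‖ ≤ f y := h1
      _ ≤ M := hyM
      _ = f (v i) := hi
      _ = (ℓ i).linear x := (hlin i x).symm
  set C : ℝ := Finset.univ.sup' hne (fun i => |ℓ i 0|) with hC
  have hCle : ∀ i, -C ≤ ℓ i 0 := by
    intro i
    have h1 := Finset.le_sup' (fun i => |ℓ i 0|) (Finset.mem_univ i)
    have h2 := neg_abs_le (ℓ i 0)
    linarith
  have hbound : ∀ x : ℝ × ℝ, Real.exp (-∑ i, Real.exp (ℓ i x)) ≤
      Real.exp (C - 1) * (Real.exp (-(ε/4 * |x.1|)) * Real.exp (-(ε/4 * |x.2|))) := by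
    intro x
    obtain ⟨i, hi⟩ := key x
    have hd : ℓ i x = (ℓ i).linear x + ℓ i 0 := by
      conv_lhs => rw [AffineMap.decomp (ℓ i)]
      simp
    have hℓ : ε/2 * ‖x‖ - C ≤ ℓ i x := by
      rw [hd]; have := hCle i; linarith
    have hsum : Real.exp (ℓ i x) ≤ ∑ j, Real.exp (ℓ j x) :=
      Finset.single_le_sum (f := fun j => Real.exp (ℓ j x)) (fun j _ => (Real.exp_pos _).le) (Finset.mem_univ i)
    have hexp : 1 + ℓ i x ≤ Real.exp (ℓ i x) := by
      linarith [Real.add_one_le_exp (ℓ i x)]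
    have h2 : Real.exp (-∑ j, Real.exp (ℓ j x)) ≤ Real.exp (-(1 + (ε/2*‖x‖ - C))) :=
      Real.exp_le_exp.mpr (by linarith)
    refine h2.trans ?_
    rw [← Real.exp_add, ← Real.exp_add]
    apply Real.exp_le_exp.mpr
    have hmax : (|x.1| + |x.2|) / 2 ≤ ‖x‖ := by
      have hn : ‖x‖ = max |x.1| |x.2| := rfl
      rw [hn]
      rcases le_total |x.1| |x.2| with h | h
      · rw [max_eq_right h]; linarith
      · rw [max_eq_left h]; linarith
    have := mul_le_mul_of_nonneg_left hmax (by linarith : (0:ℝ) ≤ ε/2)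
    linarith
  have h4 : (0:ℝ) < ε/4 := by linarith
  have hg : Integrable (fun x : ℝ × ℝ => Real.exp (C-1) *
      (Real.exp (-(ε/4 * |x.1|)) * Real.exp (-(ε/4 * |x.2|)))) := by
    have hp := (integrable_exp_neg_mul_abs' h4).mul_prod (integrable_exp_neg_mul_abs' h4)
    rw [← Measure.volume_eq_prod] at hp
    exact hp.const_mul _
  have hcont : Continuous fun x : ℝ × ℝ => Real.exp (-∑ i, Real.exp (ℓ i x)) := by
    exact Real.continuous_exp.comp
      ((continuous_finset_sum _ fun i _ =>
        Real.continuous_exp.comp (ℓ i).continuous_of_finiteDimensional).neg)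
  refine hg.mono' hcont.aestronglyMeasurable ?_
  filter_upwards with x
  rw [Real.norm_eq_abs, abs_of_pos (Real.exp_pos _)]
  exact hbound x
end

section
/- For t ∈ (0,1) and ε' > 0, |(log t)² ∫₀^{ε'} -log(1+t^c)/log t dc - π²/12| ≤ 2 t^{ε'}. -/
open MeasureTheory Real intervalIntegral

lemma int_exp_mul (a b : ℝ) (ha : a ≠ 0) :
    ∫ c in (0:ℝ)..b, Real.exp (a * c) = (Real.exp (a * b) - 1) / a := by
  rw [intervalIntegral.integral_comp_mul_left Real.exp ha]
  simp [integral_exp, smul_eq_mul, div_eq_inv_mul]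

lemma hasSum_inv_sq : HasSum (fun n : ℕ => (1:ℝ) / ((n:ℝ)+1)^2) (Real.pi^2/6) := by
  have hz : HasSum (fun n : ℕ => (1:ℝ)/(n:ℝ)^2) (Real.pi^2/6) := by
    simpa using hasSum_zeta_two
  have h := (hasSum_nat_add_iff' (f := fun n : ℕ => (1:ℝ)/(n:ℝ)^2) 1).mpr hz
  simp only [Finset.range_one, Finset.sum_singleton, Nat.cast_zero] at h
  norm_num at h
  convert h using 2 with n
  · rfl
  ring_nf

lemma hasSum_eta_two : HasSum (fun n : ℕ => ((-1:ℝ))^n / ((n:ℝ)+1)^2) (Real.pi^2/12) := by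
  have hζ := hasSum_inv_sq
  set g : ℕ → ℝ := fun m => if Odd m then (1:ℝ)/((m:ℝ)+1)^2 else 0 with hgdef
  have hg : HasSum g (Real.pi^2/24) := by
    have hinj : Function.Injective (fun k : ℕ => 2*k+1) := by
      intro a b h; dsimp at h; omega
    refine (hinj.hasSum_iff ?_).mp ?_
    · intro m hm
      simp only [hgdef]
      rw [if_neg]
      rintro ⟨k, rfl⟩
      exact hm ⟨k, by dsimp⟩
    · have heq : (g ∘ fun k : ℕ => 2*k+1) = fun k : ℕ => (1/4) * ((1:ℝ)/((k:ℝ)+1)^2) := by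
        funext k
        simp only [hgdef, Function.comp]
        rw [if_pos ⟨k, by ring⟩]
        push_cast; field_simp; ring
      rw [heq]
      have h4 := hζ.mul_left (1/4)
      convert h4 using 1
      · rfl
      ring
  have hsub := hζ.sub (hg.mul_left 2)
  have h12 : Real.pi^2/6 - 2*(Real.pi^2/24) = Real.pi^2/12 := by ring
  rw [h12] at hsub
  convert hsub using 2 with n
  · rfl
  rcases Nat.even_or_odd n with he | ho
  · rw [hgdef]; simp [Nat.not_odd_iff_even.2 he, he.neg_one_pow]
  · rw [hgdef]; simp only [if_pos ho, ho.neg_one_pow]; ring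

/-- Quantitative corner contribution estimate. -/
theorem corner_contribution_estimate (t ε' : ℝ) (ht0 : 0 < t) (ht1 : t < 1)
    (hε : 0 < ε') :
    |(Real.log t) ^ 2 *
        (∫ c in (0:ℝ)..ε', -Real.log (1 + t ^ c) / Real.log t) -
      Real.pi ^ 2 / 12| ≤ 2 * t ^ ε' := by
  set L := Real.log t with hLdef
  have hL : L < 0 := Real.log_neg ht0 ht1
  have hLne : L ≠ 0 := ne_of_lt hL
  have hLpos : (0:ℝ) < -L := by linarith
  set s : ℝ := t ^ ε' with hsdef
  have hs0 : 0 < s := Real.rpow_pos_of_pos ht0 _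
  have hs1 : s < 1 := Real.rpow_lt_one ht0.le ht1 hε
  have hrpow_exp : ∀ x : ℝ, t ^ x = Real.exp (L * x) := fun x =>
    Real.rpow_def_of_pos ht0 x
  have hsp : ∀ n : ℕ, s ^ (n+1) = Real.exp (((n:ℝ)+1) * L * ε') := by
    intro n
    rw [hsdef, ← Real.rpow_natCast (t ^ ε') (n+1), ← Real.rpow_mul ht0.le, hrpow_exp]
    push_cast; ring_nf
  set F : ℕ → ℝ → ℝ := fun n c => (-(t ^ c)) ^ (n+1) / ((n:ℝ)+1) with hFdef
  have hcontb : Continuous fun c : ℝ => t ^ (c:ℝ) := by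
    simp_rw [hrpow_exp]
    exact Real.continuous_exp.comp (continuous_const.mul continuous_id)
  have hcont : ∀ n, Continuous (F n) := fun n => ((hcontb.neg).pow _).div_const _
  have hK : ∀ n : ℕ, (∫ c in (0:ℝ)..ε', t ^ (c * ((n:ℝ)+1) : ℝ)) =
      (s ^ (n+1) - 1) / (((n:ℝ)+1) * L) := by
    intro n
    have h1 : ∀ c : ℝ, t ^ (c * ((n:ℝ)+1) : ℝ) = Real.exp ((((n:ℝ)+1) * L) * c) := by
      intro c; rw [hrpow_exp]; ring_nf
    have ha : ((n:ℝ)+1) * L ≠ 0 := mul_ne_zero (by positivity) hLne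
    simp_rw [h1]
    rw [int_exp_mul _ _ ha, hsp n]
  have hFint : ∀ n : ℕ, (∫ c in Set.Ioc (0:ℝ) ε', F n c) =
      (-1)^(n+1) * (s ^ (n+1) - 1) / (((n:ℝ)+1)^2 * L) := by
    intro n
    have h1 : ∀ c : ℝ, F n c = ((-1)^(n+1) / ((n:ℝ)+1)) * t ^ (c * ((n:ℝ)+1) : ℝ) := by
      intro c
      simp only [hFdef]
      rw [neg_pow, ← Real.rpow_natCast (t^c) (n+1), ← Real.rpow_mul ht0.le]
      push_cast; ring
    simp_rw [h1]
    rw [MeasureTheory.integral_const_mul, ← intervalIntegral.integral_of_le hε.le, hK]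
    rw [div_mul_div_comm, show ((n:ℝ)+1) * (((n:ℝ)+1) * L) = ((n:ℝ)+1)^2 * L by ring]
  have hInt : ∀ n : ℕ, IntegrableOn (F n) (Set.Ioc (0:ℝ) ε') := fun n =>
    (hcont n).integrableOn_Ioc
  have hnorm : ∀ n : ℕ, (∫ c in Set.Ioc (0:ℝ) ε', ‖F n c‖) =
      (1 - s ^ (n+1)) / (((n:ℝ)+1)^2 * (-L)) := by
    intro n
    have h1 : ∀ c : ℝ, ‖F n c‖ = (1 / ((n:ℝ)+1)) * t ^ (c * ((n:ℝ)+1) : ℝ) := by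
      intro c
      simp only [hFdef]
      rw [norm_div, norm_pow, norm_neg, Real.norm_of_nonneg (Real.rpow_nonneg ht0.le c),
        Real.norm_of_nonneg (by positivity : (0:ℝ) ≤ (n:ℝ)+1),
        ← Real.rpow_natCast (t^c) (n+1), ← Real.rpow_mul ht0.le]
      push_cast; ring
    simp_rw [h1]
    rw [MeasureTheory.integral_const_mul, ← intervalIntegral.integral_of_le hε.le, hK]
    rw [div_mul_div_comm, one_mul,
      div_eq_div_iff (by exact mul_ne_zero (by positivity) (mul_ne_zero (by positivity) hLne))
        (ne_of_gt (mul_pos (by positivity) hLpos))]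
    ring
  have hζ := hasSum_inv_sq
  have hsum_norm : Summable fun n : ℕ => ∫ c in Set.Ioc (0:ℝ) ε', ‖F n c‖ := by
    refine Summable.of_nonneg_of_le (f := fun n : ℕ => (1/(-L)) * ((1:ℝ) / ((n:ℝ)+1)^2))
      (fun n => integral_nonneg (fun c => norm_nonneg _)) ?_ (hζ.summable.mul_left _)
    · intro n
      rw [hnorm n]
      have hn2 : (0:ℝ) < ((n:ℝ)+1)^2 := by positivity
      have hsle : s ^ (n+1) ≤ 1 := pow_le_one₀ hs0.le hs1.le
      have hge : (0:ℝ) ≤ s ^ (n+1) := by positivity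
      show (1 - s ^ (n+1)) / (((n:ℝ)+1)^2 * (-L)) ≤ (1/(-L)) * ((1:ℝ)/((n:ℝ)+1)^2)
      rw [div_le_iff₀ (mul_pos hn2 hLpos)]
      have hone : (1/(-L)) * ((1:ℝ)/((n:ℝ)+1)^2) * (((n:ℝ)+1)^2 * (-L)) = 1 := by
        field_simp
      rw [hone]
      linarith
  have hswap := MeasureTheory.hasSum_integral_of_summable_integral_norm
    (μ := volume.restrict (Set.Ioc (0:ℝ) ε')) (F := F) hInt hsum_norm
  have hpt : ∀ c ∈ Set.Ioc (0:ℝ) ε', (∑' n, F n c) = -Real.log (1 + t ^ c) := by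
    intro c hc
    have htc1 : t ^ c < 1 := Real.rpow_lt_one ht0.le ht1 hc.1
    have htc0 : 0 < t ^ c := Real.rpow_pos_of_pos ht0 _
    have habs : |(-(t^c))| < 1 := by rw [abs_neg, abs_of_pos htc0]; exact htc1
    have h := hasSum_pow_div_log_of_abs_lt_one habs
    rw [show (1 : ℝ) - -(t^c) = 1 + t^c by ring] at h
    exact h.tsum_eq
  have hIeq : (∫ c in Set.Ioc (0:ℝ) ε', (∑' n, F n c)) =
      ∫ c in Set.Ioc (0:ℝ) ε', -Real.log (1 + t ^ c) :=
    setIntegral_congr_fun measurableSet_Ioc hpt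
  rw [hIeq] at hswap
  have hswap2 : HasSum (fun n : ℕ => (-1)^(n+1) * (s ^ (n+1) - 1) / (((n:ℝ)+1)^2 * L))
      (∫ c in Set.Ioc (0:ℝ) ε', -Real.log (1 + t ^ c)) := by
    convert hswap using 2 with n
    · rfl
    exact (hFint n).symm
  have hX : HasSum (fun n : ℕ => ((-1:ℝ))^n * (1 - s ^ (n+1)) / ((n:ℝ)+1)^2)
      (L * ∫ c in Set.Ioc (0:ℝ) ε', -Real.log (1 + t ^ c)) := by
    have h := hswap2.mul_left L
    convert h using 2 with n
    · rfl
    have h2 : ((n:ℝ)+1)^2 ≠ 0 := by positivity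
    field_simp
    ring
  have hgoal : L ^ 2 * (∫ c in (0:ℝ)..ε', -Real.log (1 + t ^ c) / L) =
      L * ∫ c in Set.Ioc (0:ℝ) ε', -Real.log (1 + t ^ c) := by
    rw [intervalIntegral.integral_div, intervalIntegral.integral_of_le hε.le]
    field_simp
  rw [hgoal]
  set X := L * ∫ c in Set.Ioc (0:ℝ) ε', -Real.log (1 + t ^ c) with hXdef
  have hη := hasSum_eta_two
  have hE : HasSum (fun n : ℕ => ((-1:ℝ))^n * s ^ (n+1) / ((n:ℝ)+1)^2)
      (Real.pi^2/12 - X) := by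
    have h := hη.sub hX
    convert h using 2 with n
    · rfl
    have h2 : ((n:ℝ)+1)^2 ≠ 0 := by positivity
    field_simp
    ring
  have habs : ∀ n : ℕ, |((-1:ℝ))^n * s ^ (n+1) / ((n:ℝ)+1)^2| ≤ s * ((1:ℝ)/((n:ℝ)+1)^2) := by
    intro n
    rw [abs_div, abs_mul, abs_pow, abs_neg, abs_one, one_pow, one_mul,
      abs_of_nonneg (by positivity : (0:ℝ) ≤ s ^ (n+1)),
      abs_of_nonneg (by positivity : (0:ℝ) ≤ ((n:ℝ)+1)^2)]
    rw [mul_one_div]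
    gcongr
    exact pow_le_of_le_one hs0.le hs1.le (Nat.succ_ne_zero n)
  have hB : HasSum (fun n : ℕ => s * ((1:ℝ) / ((n:ℝ)+1)^2)) (s * (Real.pi^2/6)) :=
    hζ.mul_left s
  have hub : Real.pi^2/12 - X ≤ s * (Real.pi^2/6) :=
    hasSum_le (fun n => le_trans (le_abs_self _) (habs n)) hE hB
  have hlb : -(s * (Real.pi^2/6)) ≤ Real.pi^2/12 - X :=
    hasSum_le (fun n => (abs_le.mp (habs n)).1) hB.neg hE
  have hπ : s * (Real.pi^2/6) ≤ 2 * s := by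
    have hπ2 : Real.pi^2 ≤ 12 := by nlinarith [Real.pi_lt_d2, Real.pi_pos]
    nlinarith
  rw [abs_sub_comm, abs_le]
  constructor
  · linarith
  · linarith
end
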